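/- Every permutation u of Fin (n+1) is the product of some sublist of the staircase list L_max; that is, for every u in Perm (Fin (n+1)) there exists a sublist M of L_max (a list obtained from L_max by deleting some of its entries, keeping the order) such that the product of M equals u. -/

import Mathlib

noncomputable section

open Fin.NatCast in
/-- The adjacent transposition `s_r = (r, r+1)` (1-based indexing) in `Perm (Fin (n+1))`,
acting on `{1,…,n+1}` identified with `Fin (n+1)`. -/
def s (n : ℕ) (r : ℕ) : Equiv.Perm (Fin (n + 1)) := Equiv.swap (↑(r - 1)) (↑r)

/-- The block `(s_b, s_{b-1}, …, s_a)`, recorded as the list of indices `[b, b-1, …, a]`. -/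
def block (a b : ℕ) : List ℕ := (List.range' a (b + 1 - a)).reverse

/-- The staircase list `L_max`: concatenation of the blocks `(s_p, …, s_1)` for
`p = 1, …, n`, of length `n(n+1)/2`. -/
def Lmax (n : ℕ) : List ℕ :=
  (List.ofFn fun p : Fin n => block 1 ((p : ℕ) + 1)).flatten

/-!
Induct on `m`: a permutation fixing every point above `m` is a product of a sublist of
`Lmax m = Lmax (m-1) ++ block 1 m`. Given `u` fixing every point above `m + 1`, let
`j = u⁻¹ (m + 1)`. The tail `block (j + 1) (m + 1)` of the last block multiplies out to a cycle
`c` sending `j` to `m + 1` and fixing every point above `m + 1`, so `u * c⁻¹` fixes every point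
above `m`, and `u = (u * c⁻¹) * c`.
-/

open Fin.NatCast

lemma s_succ (n r : ℕ) : s n (r + 1) = Equiv.swap (r : Fin (n + 1)) ↑(r + 1) := rfl

lemma s_apply_of_lt {n r : ℕ} {i : Fin (n + 1)} (h : r < i.val) : s n r i = i := by
  apply Equiv.swap_apply_of_ne_of_ne <;>
  · rintro rfl
    rw [Fin.val_natCast] at h
    have := Nat.mod_le (r - 1) (n + 1)
    have := Nat.mod_le r (n + 1)
    omega

lemma prod_map_s_apply_of_forall_lt {n : ℕ} {i : Fin (n + 1)} :
    ∀ {L : List ℕ}, (∀ r ∈ L, r < i.val) → (L.map (s n)).prod i = i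
  | [], _ => rfl
  | r :: L, h => by
    rw [List.map_cons, List.prod_cons, Equiv.Perm.mul_apply,
      prod_map_s_apply_of_forall_lt fun r' hr' => h r' (List.mem_cons_of_mem r hr'),
      s_apply_of_lt (h r List.mem_cons_self)]

lemma mem_block {a b r : ℕ} : r ∈ block a b ↔ a ≤ r ∧ r ≤ b := by
  simp only [block, List.mem_reverse, List.mem_range'_1]
  omega

lemma block_succ {a b : ℕ} (h : a ≤ b + 1) : block a (b + 1) = (b + 1) :: block a b := by
  rw [block, block, show b + 1 + 1 - a = b + 1 - a + 1 by omega, List.range'_concat,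
    List.reverse_append]
  simp only [List.reverse_singleton, List.singleton_append, one_mul]
  congr 1
  omega

lemma block_append_block {a b c : ℕ} (hab : a ≤ b + 1) (hbc : b ≤ c) :
    block (b + 1) c ++ block a b = block a c := by
  have h := List.range'_append_1 (s := a) (m := b + 1 - a) (n := c - b)
  rw [show a + (b + 1 - a) = b + 1 by omega, show b + 1 - a + (c - b) = c + 1 - a by omega] at h
  rw [block, block, block, ← List.reverse_append, show c + 1 - (b + 1) = c - b by omega, h]

lemma Lmax_succ (m : ℕ) : Lmax (m + 1) = Lmax m ++ block 1 (m + 1) := by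
  rw [Lmax, List.ofFn_succ', List.concat_eq_append, List.flatten_append, List.flatten_singleton]
  rfl

lemma prod_block_apply {n a b : ℕ} (hab : a ≤ b) (hb : b ≤ n) :
    ((block (a + 1) b).map (s n)).prod (a : Fin (n + 1)) = b := by
  induction b, hab using Nat.le_induction with
  | base => simp [block]
  | succ b hab ih =>
    rw [block_succ (by omega), List.map_cons, List.prod_cons, Equiv.Perm.mul_apply,
      ih (by omega), s_succ, Equiv.swap_apply_left]

lemma Equiv.Perm.eq_one_of_forall_pos_apply {n : ℕ} {u : Equiv.Perm (Fin (n + 1))}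
    (hu : ∀ i : Fin (n + 1), 0 < i.val → u i = i) : u = 1 := by
  refine Equiv.Perm.card_support_le_one.mp (Finset.card_le_one.mpr fun i hi j hj => ?_)
  rw [Equiv.Perm.mem_support] at hi hj
  have hi0 : i.val = 0 := by by_contra h; exact hi (hu i (Nat.pos_of_ne_zero h))
  have hj0 : j.val = 0 := by by_contra h; exact hj (hu j (Nat.pos_of_ne_zero h))
  exact Fin.ext (hi0.trans hj0.symm)

lemma exists_sublist_Lmax_prod_eq {n : ℕ} :
    ∀ m ≤ n, ∀ u : Equiv.Perm (Fin (n + 1)), (∀ i : Fin (n + 1), m < i.val → u i = i) →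
      ∃ M : List ℕ, M.Sublist (Lmax m) ∧ (M.map (s n)).prod = u
  | 0, _, u, hu => ⟨[], List.nil_sublist _, (Equiv.Perm.eq_one_of_forall_pos_apply hu).symm⟩
  | m + 1, hm, u, hu => by
    set j := u⁻¹ ↑(m + 1)
    have hm1 : (↑(m + 1) : Fin (n + 1)).val = m + 1 := Fin.val_cast_of_lt (by omega)
    have huj : u j = ↑(m + 1) := u.apply_symm_apply _
    have hj : j.val ≤ m + 1 := by
      by_contra! h
      rw [hu j h] at huj
      rw [huj, hm1] at h
      omega
    set c := ((block (j.val + 1) (m + 1)).map (s n)).prod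
    have hcj : c j = ↑(m + 1) := by
      simpa only [Fin.cast_val_eq_self] using prod_block_apply (n := n) hj (by omega)
    have hc : ∀ i : Fin (n + 1), m + 1 < i.val → c i = i := fun i hi =>
      prod_map_s_apply_of_forall_lt fun r hr => by have := mem_block.mp hr; omega
    have hv : ∀ i : Fin (n + 1), m < i.val → (u * c⁻¹) i = i := by
      intro i hi
      rw [Equiv.Perm.mul_apply]
      rcases (Nat.succ_le_of_lt hi).eq_or_lt with hi | hi
      · obtain rfl : i = ↑(m + 1) := Fin.ext (by omega)
        rw [Equiv.Perm.inv_eq_iff_eq.mpr hcj.symm, huj]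
      · rw [Equiv.Perm.inv_eq_iff_eq.mpr (hc i hi).symm, hu i hi]
    obtain ⟨M, hM, hMu⟩ := exists_sublist_Lmax_prod_eq m (by omega) (u * c⁻¹) hv
    refine ⟨M ++ block (j.val + 1) (m + 1), ?_, ?_⟩
    · rw [Lmax_succ, ← block_append_block (Nat.le_add_left 1 j.val) hj]
      exact hM.append (List.sublist_append_left _ _)
    · rw [List.map_append, List.prod_append, hMu, inv_mul_cancel_right]

theorem stmt1_general (n : ℕ) (u : Equiv.Perm (Fin (n + 1))) :
    ∃ M : List ℕ, M.Sublist (Lmax n) ∧ (M.map (s n)).prod = u :=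
  exists_sublist_Lmax_prod_eq n le_rfl u fun i hi => absurd i.isLt (by omega)

/-- Every permutation `u` of `Fin (n+1)` is the product of some sublist of the staircase
list `L_max`. -/
theorem stmt1 (n : ℕ) (hn : 1 ≤ n) (u : Equiv.Perm (Fin (n + 1))) :
    ∃ M : List ℕ, M.Sublist (Lmax n) ∧ (M.map (s n)).prod = u :=
  stmt1_general n u
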